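/- arXiv:2001.03433 — 2 statements merged into one kernel-verified Lean document; each statement's English description precedes it below -/
import Mathlib

section
/- One has P(4,2) = 5, P(4,4) = 9, P(4,6) = 12, P(4,8) = 15, and for every even integer k > 8, P(4,k) = P(4, k − 8τ) + 15τ, where τ = ⌊(k−1)/8⌋. -/
/-! Upper bounds: there are 2-, 4- and 6-PIR matrices of lengths 5, 9 and 12, the simplex code is
8-PIR of length 15, and appending a copy of the simplex code adds 8 to `k` and 15 to `n`.

Lower bounds: if `u ≠ 0` has `u i ≠ 0`, the codeword `u ᵥ* G` is nonzero somewhere on each of the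
`k` disjoint recovery sets of `e i`, so its weight `w u` is at least `k`. Summing `w` over the 15
nonzero `u` counts every nonzero column 8 times, whence `15 k ≤ 8 n`. Over a half-space
`{u | u i ≠ 0}` a column is counted 0, 4 or 8 times, so each such partial sum is a multiple of 4;
therefore the total excess `∑ w - 15 k` is 0 or at least 4, which settles `k ≡ 2 (mod 8)`. For
`k ≡ 4 (mod 8)`, length `(15 k + 4) / 8` would force an excess of exactly 4, all of it at a single
`u₀`, and no zero column. Then every other `u` of a half-space through `u₀` meets each recovery set
exactly once, the same count modulo 4 forces `u₀` to do so too, and `w u₀ = k`: a contradiction.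
-/

/-- An `s × n` matrix `G` over `𝔽₂` is a `k`-PIR generator matrix if for every
index `i` there exist `k` pairwise disjoint recovery sets of column indices,
each of whose column sums equals the `i`-th standard unit vector. -/
def IsPIRMatrix (s n k : ℕ) (G : Matrix (Fin s) (Fin n) (ZMod 2)) : Prop :=
  ∀ i : Fin s, ∃ R : Fin k → Finset (Fin n),
    (∀ j j' : Fin k, j ≠ j' → Disjoint (R j) (R j')) ∧
    ∀ j : Fin k, (∑ h ∈ R j, fun r : Fin s => G r h) = Pi.single i 1

/-- `PIRlen s k` is the smallest positive `n` for which an `s × n` `k`-PIR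
generator matrix over `𝔽₂` exists. -/
noncomputable def PIRlen (s k : ℕ) : ℕ :=
  sInf {n : ℕ | 0 < n ∧ ∃ G : Matrix (Fin s) (Fin n) (ZMod 2), IsPIRMatrix s n k G}

theorem test : True := trivial

open Finset Matrix Function

lemma PIRlen_eq_of_isPIRMatrix {s k n : ℕ} (hn : 0 < n) {G : Matrix (Fin s) (Fin n) (ZMod 2)}
    (hG : IsPIRMatrix s n k G)
    (hmin : ∀ m (G' : Matrix (Fin s) (Fin m) (ZMod 2)), IsPIRMatrix s m k G' → n ≤ m) :
    PIRlen s k = n :=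
  IsLeast.csInf_eq ⟨⟨hn, G, hG⟩, fun m ⟨_, G', hG'⟩ => hmin m G' hG'⟩

lemma IsPIRMatrix.append {s n₁ n₂ k₁ k₂ : ℕ} {G₁ : Matrix (Fin s) (Fin n₁) (ZMod 2)}
    {G₂ : Matrix (Fin s) (Fin n₂) (ZMod 2)}
    (h₁ : IsPIRMatrix s n₁ k₁ G₁) (h₂ : IsPIRMatrix s n₂ k₂ G₂) :
    IsPIRMatrix s (n₁ + n₂) (k₁ + k₂) (Matrix.of fun r => Fin.append (G₁ r) (G₂ r)) := by
  intro i
  obtain ⟨R₁, hd₁, hs₁⟩ := h₁ i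
  obtain ⟨R₂, hd₂, hs₂⟩ := h₂ i
  have cross (S : Finset (Fin n₁)) (T : Finset (Fin n₂)) :
      Disjoint (S.map (Fin.castAddEmb n₂)) (T.map (Fin.natAddEmb n₁)) := by
    simp only [Finset.disjoint_left, mem_map, Fin.castAddEmb_apply, Fin.natAddEmb_apply]
    rintro _ ⟨a, -, rfl⟩ ⟨b, -, hb⟩
    rw [Fin.ext_iff, Fin.val_natAdd, Fin.val_castAdd] at hb
    omega
  refine ⟨Fin.append (fun j => (R₁ j).map (Fin.castAddEmb n₂))
    (fun j => (R₂ j).map (Fin.natAddEmb n₁)), ?_, ?_⟩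
  · intro j j'
    refine Fin.addCases (fun j₁ => ?_) (fun j₂ => ?_) j <;>
      refine Fin.addCases (fun j₁' => ?_) (fun j₂' => ?_) j' <;>
      simp only [Fin.append_left, Fin.append_right, ne_eq, Fin.castAdd_inj, Fin.natAdd_inj,
        disjoint_map]
    exacts [hd₁ _ _, fun _ => cross _ _, fun _ => (cross _ _).symm, hd₂ _ _]
  · refine Fin.addCases (fun j => ?_) (fun j => ?_)
    · simpa [sum_map] using hs₁ j
    · simpa [sum_map] using hs₂ j

def pirMatrix₂ : Matrix (Fin 4) (Fin 5) (ZMod 2) :=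
  !![1, 0, 0, 0, 1; 0, 1, 0, 0, 1; 0, 0, 1, 0, 1; 0, 0, 0, 1, 1]

def pirMatrix₄ : Matrix (Fin 4) (Fin 9) (ZMod 2) :=
  !![0, 0, 1, 1, 0, 1, 1, 1, 1; 1, 0, 1, 0, 1, 1, 1, 0, 1; 0, 0, 1, 1, 1, 0, 0, 0, 1;
    1, 1, 1, 0, 1, 0, 0, 0, 0]

def pirMatrix₆ : Matrix (Fin 4) (Fin 12) (ZMod 2) :=
  !![1, 1, 0, 0, 1, 0, 0, 1, 0, 0, 1, 1; 0, 1, 1, 1, 1, 0, 0, 0, 1, 0, 0, 1;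
    1, 1, 1, 1, 0, 0, 1, 0, 0, 1, 1, 1; 1, 0, 1, 0, 0, 1, 0, 0, 1, 1, 0, 1]

/-- The generator matrix of the simplex code: column `h` is the binary expansion of `h + 1`. -/
def simplexMatrix : Matrix (Fin 4) (Fin 15) (ZMod 2) :=
  !![1, 0, 1, 0, 1, 0, 1, 0, 1, 0, 1, 0, 1, 0, 1; 0, 1, 1, 0, 0, 1, 1, 0, 0, 1, 1, 0, 0, 1, 1;
    0, 0, 0, 1, 1, 1, 1, 0, 0, 0, 0, 1, 1, 1, 1; 0, 0, 0, 0, 0, 0, 0, 1, 1, 1, 1, 1, 1, 1, 1]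

lemma isPIRMatrix_pirMatrix₂ : IsPIRMatrix 4 5 2 pirMatrix₂ := by
  intro i
  refine ⟨(![![{0}, {1, 2, 3, 4}], ![{1}, {0, 2, 3, 4}], ![{2}, {0, 1, 3, 4}],
    ![{3}, {0, 1, 2, 4}]] : Fin 4 → Fin 2 → Finset (Fin 5)) i, ?_, ?_⟩ <;> fin_cases i <;> decide

lemma isPIRMatrix_pirMatrix₄ : IsPIRMatrix 4 9 4 pirMatrix₄ := by
  intro i
  refine ⟨(![![{7}, {2, 4}, {0, 1, 5}, {3, 6, 8}], ![{0, 1}, {3, 8}, {5, 7}, {2, 4, 6}],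
    ![{0, 4}, {3, 7}, {5, 8}, {1, 2, 6}], ![{1}, {2, 8}, {0, 5, 7}, {3, 4, 6}]] :
    Fin 4 → Fin 4 → Finset (Fin 9)) i, ?_, ?_⟩ <;> fin_cases i <;> decide

lemma isPIRMatrix_pirMatrix₆ : IsPIRMatrix 4 12 6 pirMatrix₆ := by
  intro i
  refine ⟨(![![{7}, {0, 9}, {1, 3}, {2, 11}, {6, 10}, {4, 5, 8}],
    ![{0, 11}, {1, 10}, {2, 9}, {3, 6}, {4, 7}, {5, 8}],
    ![{6}, {1, 4}, {2, 8}, {5, 9}, {7, 10}, {0, 3, 11}],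
    ![{5}, {0, 10}, {1, 11}, {2, 3}, {6, 9}, {4, 7, 8}]] :
    Fin 4 → Fin 6 → Finset (Fin 12)) i, ?_, ?_⟩ <;> fin_cases i <;> decide

lemma isPIRMatrix_simplex : IsPIRMatrix 4 15 8 simplexMatrix := by
  intro i
  refine ⟨(![![{0}, {1, 2}, {3, 4}, {5, 6}, {7, 8}, {9, 10}, {11, 12}, {13, 14}],
    ![{1}, {0, 2}, {3, 5}, {4, 6}, {7, 9}, {8, 10}, {11, 13}, {12, 14}],
    ![{3}, {0, 4}, {1, 5}, {2, 6}, {7, 11}, {8, 12}, {9, 13}, {10, 14}],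
    ![{7}, {0, 8}, {1, 9}, {2, 10}, {3, 11}, {4, 12}, {5, 13}, {6, 14}]] :
    Fin 4 → Fin 8 → Finset (Fin 15)) i, ?_, ?_⟩ <;> fin_cases i <;> decide

lemma IsPIRMatrix.exists_add_fifteen_mul {n k : ℕ} {G : Matrix (Fin 4) (Fin n) (ZMod 2)}
    (hG : IsPIRMatrix 4 n k G) (τ : ℕ) :
    ∃ G' : Matrix (Fin 4) (Fin (15 * τ + n)) (ZMod 2),
      IsPIRMatrix 4 (15 * τ + n) (8 * τ + k) G' := by
  induction τ with
  | zero => rw [mul_zero, zero_add, mul_zero, zero_add]; exact ⟨G, hG⟩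
  | succ τ ih =>
    obtain ⟨G', hG'⟩ := ih
    rw [show 15 * (τ + 1) + n = 15 * τ + n + 15 by ring,
      show 8 * (τ + 1) + k = 8 * τ + k + 8 by ring]
    exact ⟨_, hG'.append isPIRMatrix_simplex⟩

section Combinatorics

variable {ι α : Type*} [Fintype ι] [DecidableEq α] {R : ι → Finset α}

lemma sum_card_inter_eq_card_biUnion_inter (hR : Pairwise (Disjoint on R)) (D : Finset α) :
    ∑ j, #(R j ∩ D) = #(univ.biUnion R ∩ D) := by
  rw [biUnion_inter, card_biUnion]
  exact fun j _ j' _ hjj' => (hR hjj').mono inter_subset_left inter_subset_left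

lemma card_inter_eq_one_of_card_le (hR : Pairwise (Disjoint on R)) {D : Finset α}
    (hmeet : ∀ j, (R j ∩ D).Nonempty) (hD : #D ≤ Fintype.card ι) :
    (∀ j, #(R j ∩ D) = 1) ∧ D ⊆ univ.biUnion R := by
  have hsum := sum_card_inter_eq_card_biUnion_inter hR D
  have hle : #(univ.biUnion R ∩ D) ≤ #D := card_le_card inter_subset_right
  have hone : ∀ j ∈ univ, 1 ≤ #(R j ∩ D) := fun j _ => (hmeet j).card_pos
  have hge : Fintype.card ι ≤ ∑ j, #(R j ∩ D) := by
    simpa using sum_le_sum hone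
  refine ⟨fun j => ?_, ?_⟩
  · have := (sum_eq_sum_iff_of_le hone).1
      (by rw [sum_const, card_univ, smul_eq_mul, mul_one]; omega)
    exact (this j (mem_univ j)).symm
  · have := eq_of_subset_of_card_le inter_subset_right (by omega : #D ≤ #(univ.biUnion R ∩ D))
    exact inter_eq_right.1 this

end Combinatorics

section Codewords

variable {s n k : ℕ} {G : Matrix (Fin s) (Fin n) (ZMod 2)}

def codewordSupport (G : Matrix (Fin s) (Fin n) (ZMod 2)) (u : Fin s → ZMod 2) : Finset (Fin n) :=
  {h | (u ᵥ* G) h ≠ 0}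

lemma sum_card_inter_codewordSupport (G : Matrix (Fin s) (Fin n) (ZMod 2))
    (S : Finset (Fin s → ZMod 2)) (T : Finset (Fin n)) :
    ∑ u ∈ S, #(T ∩ codewordSupport G u) = ∑ h ∈ T, #{u ∈ S | u ⬝ᵥ (fun r => G r h) ≠ 0} := by
  simp only [codewordSupport, inter_filter, inter_univ, card_filter]
  exact sum_comm

lemma inter_codewordSupport_nonempty {R : Finset (Fin n)} {i : Fin s}
    (hR : (∑ h ∈ R, fun r => G r h) = Pi.single i 1) {u : Fin s → ZMod 2} (hu : u i ≠ 0) :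
    (R ∩ codewordSupport G u).Nonempty := by
  have hsum : ∑ h ∈ R, (u ᵥ* G) h = u i := by
    calc ∑ h ∈ R, (u ᵥ* G) h = u ⬝ᵥ ∑ h ∈ R, fun r => G r h := (dotProduct_sum _ _ _).symm
      _ = u i := by rw [hR, dotProduct_single, mul_one]
  obtain ⟨h, hR, hh⟩ := exists_ne_zero_of_sum_ne_zero (hsum ▸ hu)
  exact ⟨h, mem_inter.2 ⟨hR, mem_filter.2 ⟨mem_univ h, hh⟩⟩⟩

lemma IsPIRMatrix.le_card_codewordSupport (hG : IsPIRMatrix s n k G) {u : Fin s → ZMod 2}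
    (hu : u ≠ 0) : k ≤ #(codewordSupport G u) := by
  obtain ⟨i, hi⟩ := Function.ne_iff.1 hu
  obtain ⟨R, hd, hs⟩ := hG i
  calc k = ∑ _j : Fin k, 1 := by simp
    _ ≤ ∑ j, #(R j ∩ codewordSupport G u) :=
      sum_le_sum fun j _ => (inter_codewordSupport_nonempty (hs j) hi).card_pos
    _ ≤ #(codewordSupport G u) := by
      rw [sum_card_inter_eq_card_biUnion_inter hd]
      exact card_le_card inter_subset_right

end Codewords

lemma ne_zero_of_apply_ne_zero {ι M : Type*} [Zero M] {u : ι → M} {i : ι} (hu : u i ≠ 0) :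
    u ≠ 0 :=
  fun h => hu (by simp [h])

lemma card_ne_zero_vectors : #({u | u ≠ 0} : Finset (Fin 4 → ZMod 2)) = 15 := by decide

lemma card_apply_ne_zero (i : Fin 4) : #({u | u i ≠ 0} : Finset (Fin 4 → ZMod 2)) = 8 := by
  revert i; decide

lemma card_ne_zero_apply_eq_zero (i : Fin 4) :
    #({u | u ≠ 0 ∧ u i = 0} : Finset (Fin 4 → ZMod 2)) = 7 := by
  revert i; decide

lemma card_dotProduct_ne_zero {c : Fin 4 → ZMod 2} (hc : c ≠ 0) :
    #{u ∈ ({u | u ≠ 0} : Finset (Fin 4 → ZMod 2)) | u ⬝ᵥ c ≠ 0} = 8 := by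
  revert c; decide

lemma four_dvd_card_dotProduct_ne_zero (i : Fin 4) (c : Fin 4 → ZMod 2) :
    4 ∣ #{u ∈ ({u | u i ≠ 0} : Finset (Fin 4 → ZMod 2)) | u ⬝ᵥ c ≠ 0} := by
  revert i c; decide

lemma four_le_card_dotProduct_ne_zero (i : Fin 4) {c : Fin 4 → ZMod 2} (hc : c ≠ 0) :
    4 ≤ #{u ∈ ({u | u i ≠ 0} : Finset (Fin 4 → ZMod 2)) | u ⬝ᵥ c ≠ 0} := by
  revert i c; decide

lemma sum_ne_zero_eq_add (w : (Fin 4 → ZMod 2) → ℕ) (i : Fin 4) :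
    ∑ u ∈ {u | u ≠ 0}, w u = ∑ u ∈ {u | u i ≠ 0}, w u + ∑ u ∈ {u | u ≠ 0 ∧ u i = 0}, w u := by
  rw [← sum_filter_add_sum_filter_not _ (fun u => u i ≠ 0), filter_filter, filter_filter]
  congr 2 <;> ext u <;> simp only [mem_filter, mem_univ, true_and]
  · exact ⟨And.right, fun h => ⟨ne_zero_of_apply_ne_zero h, h⟩⟩
  · simp

section Excess

variable {w : (Fin 4 → ZMod 2) → ℕ} {k : ℕ}

lemma add_four_le_sum_apply_ne_zero (hk : ∀ u ≠ 0, k ≤ w u)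
    (h4 : ∀ i, 4 ∣ ∑ u ∈ {u | u i ≠ 0}, w u) {u₀ : Fin 4 → ZMod 2} {i : Fin 4}
    (hi : u₀ i ≠ 0) (hlt : k < w u₀) : 8 * k + 4 ≤ ∑ u ∈ {u | u i ≠ 0}, w u := by
  have : 8 * k < ∑ u ∈ {u | u i ≠ 0}, w u := by
    calc 8 * k = ∑ _u ∈ ({u | u i ≠ 0} : Finset (Fin 4 → ZMod 2)), k := by
          rw [sum_const, card_apply_ne_zero, smul_eq_mul]
      _ < _ := sum_lt_sum (fun u hu => hk u (ne_zero_of_apply_ne_zero (mem_filter.1 hu).2))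
          ⟨u₀, mem_filter.2 ⟨mem_univ _, hi⟩, hlt⟩
  have := h4 i
  omega

lemma seven_mul_le_sum_apply_eq_zero (hk : ∀ u ≠ 0, k ≤ w u) (i : Fin 4) :
    7 * k ≤ ∑ u ∈ {u | u ≠ 0 ∧ u i = 0}, w u := by
  simpa [card_ne_zero_apply_eq_zero] using
    card_nsmul_le_sum ({u | u ≠ 0 ∧ u i = 0} : Finset (Fin 4 → ZMod 2)) w k
      fun u hu => hk u (mem_filter.1 hu).2.1

lemma sum_ne_zero_of_forall_eq (hw : ∀ u ≠ 0, w u = k) : ∑ u ∈ {u | u ≠ 0}, w u = 15 * k := by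
  rw [sum_congr rfl fun u hu => hw u (mem_filter.1 hu).2, sum_const, card_ne_zero_vectors,
    smul_eq_mul]

lemma exists_lt_of_sum_ne (hk : ∀ u ≠ 0, k ≤ w u) (hB : ∑ u ∈ {u | u ≠ 0}, w u ≠ 15 * k) :
    ∃ u ≠ 0, k < w u := by
  by_contra! h
  exact hB (sum_ne_zero_of_forall_eq fun u hu => le_antisymm (h u hu) (hk u hu))

lemma sum_ne_zero_eq_or_add_four_le (hk : ∀ u ≠ 0, k ≤ w u)
    (h4 : ∀ i, 4 ∣ ∑ u ∈ {u | u i ≠ 0}, w u) :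
    ∑ u ∈ {u | u ≠ 0}, w u = 15 * k ∨ 15 * k + 4 ≤ ∑ u ∈ {u | u ≠ 0}, w u := by
  refine or_iff_not_imp_left.2 fun hB => ?_
  obtain ⟨u₀, hu₀, hlt⟩ := exists_lt_of_sum_ne hk hB
  obtain ⟨i, hi⟩ := Function.ne_iff.1 hu₀
  have := add_four_le_sum_apply_ne_zero hk h4 hi hlt
  have := seven_mul_le_sum_apply_eq_zero hk i
  rw [sum_ne_zero_eq_add w i]
  omega

/-- An excess at `u₀` pushes the multiple of 4 `∑ u ∈ {u | u i ≠ 0}, w u` to at least `8 k + 4`,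
so an excess budget of 4 leaves nothing for the vectors outside that half-space. -/
lemma apply_eq_of_sum_le (hk : ∀ u ≠ 0, k ≤ w u) (h4 : ∀ i, 4 ∣ ∑ u ∈ {u | u i ≠ 0}, w u)
    (hB : ∑ u ∈ {u | u ≠ 0}, w u ≤ 15 * k + 4) {u₀ : Fin 4 → ZMod 2} {i : Fin 4}
    (hi : u₀ i ≠ 0) (hlt : k < w u₀) {v : Fin 4 → ZMod 2} (hv : v ≠ 0) (hvi : v i = 0) :
    w v = k := by
  have hA := add_four_le_sum_apply_ne_zero hk h4 hi hlt
  rw [sum_ne_zero_eq_add w i] at hB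
  have hle : ∀ u ∈ ({u | u ≠ 0 ∧ u i = 0} : Finset (Fin 4 → ZMod 2)), k ≤ w u :=
    fun u hu => hk u (mem_filter.1 hu).2.1
  have hsum : ∑ u ∈ ({u | u ≠ 0 ∧ u i = 0} : Finset (Fin 4 → ZMod 2)), k =
      ∑ u ∈ {u | u ≠ 0 ∧ u i = 0}, w u := by
    rw [sum_const, card_ne_zero_apply_eq_zero, smul_eq_mul]
    have := seven_mul_le_sum_apply_eq_zero hk i
    omega
  exact ((sum_eq_sum_iff_of_le hle).1 hsum v (mem_filter.2 ⟨mem_univ v, hv, hvi⟩)).symm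

lemma exists_forall_ne_eq (hk : ∀ u ≠ 0, k ≤ w u) (h4 : ∀ i, 4 ∣ ∑ u ∈ {u | u i ≠ 0}, w u)
    (hB : ∑ u ∈ {u | u ≠ 0}, w u = 15 * k + 4) :
    ∃ u₀, u₀ ≠ 0 ∧ ∀ u ≠ 0, u ≠ u₀ → w u = k := by
  obtain ⟨u₀, hu₀, hlt₀⟩ := exists_lt_of_sum_ne hk (by omega)
  refine ⟨u₀, hu₀, fun u hu hne => ?_⟩
  by_contra hwu
  have hlt : k < w u := lt_of_le_of_ne (hk u hu) (Ne.symm hwu)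
  obtain ⟨i, hi⟩ := Function.ne_iff.1 hne
  have hZ2 : ∀ a b : ZMod 2, a ≠ b → a = 0 ∨ b = 0 := by decide
  rcases hZ2 _ _ hi with h | h
  · exact hwu (apply_eq_of_sum_le hk h4 hB.le (h ▸ hi).symm hlt₀ hu h)
  · exact hlt₀.ne' (apply_eq_of_sum_le hk h4 hB.le (h ▸ hi) hlt hu₀ h)

end Excess

section LowerBounds

variable {n k : ℕ} {G : Matrix (Fin 4) (Fin n) (ZMod 2)}

lemma sum_card_codewordSupport (G : Matrix (Fin 4) (Fin n) (ZMod 2)) :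
    ∑ u ∈ {u | u ≠ 0}, #(codewordSupport G u) = 8 * #{h | (fun r => G r h) ≠ 0} := by
  have := sum_card_inter_codewordSupport G {u | u ≠ 0} univ
  simp only [univ_inter] at this
  rw [this, card_filter, mul_sum]
  refine sum_congr rfl fun h _ => ?_
  split_ifs with hc
  · rw [card_dotProduct_ne_zero hc, mul_one]
  · simp [not_not.1 hc]

lemma four_dvd_sum_card_codewordSupport (G : Matrix (Fin 4) (Fin n) (ZMod 2)) (i : Fin 4) :
    4 ∣ ∑ u ∈ {u | u i ≠ 0}, #(codewordSupport G u) := by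
  have := sum_card_inter_codewordSupport G {u | u i ≠ 0} univ
  simp only [univ_inter] at this
  rw [this]
  exact dvd_sum fun h _ => four_dvd_card_dotProduct_ne_zero i _

lemma IsPIRMatrix.sum_card_codewordSupport_eq_or (hG : IsPIRMatrix 4 n k G) :
    ∑ u ∈ {u | u ≠ 0}, #(codewordSupport G u) = 15 * k ∨
      15 * k + 4 ≤ ∑ u ∈ {u | u ≠ 0}, #(codewordSupport G u) :=
  sum_ne_zero_eq_or_add_four_le (fun _ hu => hG.le_card_codewordSupport hu)
    (four_dvd_sum_card_codewordSupport G)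

lemma card_inter_codewordSupport_eq_one {R : Finset (Fin n)}
    (hcol : ∀ h ∈ R, (fun r => G r h) ≠ 0)
    {u₀ : Fin 4 → ZMod 2} {i : Fin 4} (hi : u₀ i ≠ 0)
    (hone : ∀ u, u i ≠ 0 → u ≠ u₀ → #(R ∩ codewordSupport G u) = 1) :
    #(R ∩ codewordSupport G u₀) = 1 := by
  -- Each column of `R` lies in 4 or 8 of the supports over the half-space `u i ≠ 0`, so
  -- `#(R ∩ codewordSupport G u₀) + 7` is a multiple of 4 and at least `4 * #R`.
  have hu₀ : u₀ ∈ ({u | u i ≠ 0} : Finset (Fin 4 → ZMod 2)) := mem_filter.2 ⟨mem_univ _, hi⟩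
  have hcount := sum_card_inter_codewordSupport G {u | u i ≠ 0} R
  rw [← add_sum_erase _ _ hu₀, sum_congr rfl fun u hu =>
      hone u (mem_filter.1 (mem_of_mem_erase hu)).2 (ne_of_mem_erase hu),
    sum_const, card_erase_of_mem hu₀, card_apply_ne_zero, smul_eq_mul, mul_one] at hcount
  have h4 := dvd_sum fun h (_ : h ∈ R) => four_dvd_card_dotProduct_ne_zero i (fun r => G r h)
  have hge := card_nsmul_le_sum R _ 4 fun h hh => four_le_card_dotProduct_ne_zero i (hcol h hh)
  have hle : #(R ∩ codewordSupport G u₀) ≤ #R := card_le_card inter_subset_left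
  rw [smul_eq_mul] at hge
  omega

lemma IsPIRMatrix.card_codewordSupport_eq_of_forall_ne (hG : IsPIRMatrix 4 n k G)
    (hcol : ∀ h, (fun r => G r h) ≠ 0) {u₀ : Fin 4 → ZMod 2} {i : Fin 4} (hi : u₀ i ≠ 0)
    (htight : ∀ u, u i ≠ 0 → u ≠ u₀ → #(codewordSupport G u) = k) :
    #(codewordSupport G u₀) = k := by
  obtain ⟨R, hd, hs⟩ := hG i
  have hexact : ∀ u, u i ≠ 0 → u ≠ u₀ →
      (∀ j, #(R j ∩ codewordSupport G u) = 1) ∧ codewordSupport G u ⊆ univ.biUnion R :=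
    fun u hu hne => card_inter_eq_one_of_card_le hd
      (fun j => inter_codewordSupport_nonempty (hs j) hu) (by simp [htight u hu hne])
  have hcover (h : Fin n) : h ∈ univ.biUnion R := by
    obtain ⟨u, hu, hne⟩ :=
      exists_mem_ne ((by norm_num : 1 < 4).trans_le (four_le_card_dotProduct_ne_zero i (hcol h)))
        u₀
    obtain ⟨hui, hh⟩ := mem_filter.1 hu
    exact (hexact u (mem_filter.1 hui).2 hne).2 (mem_filter.2 ⟨mem_univ h, hh⟩)
  calc #(codewordSupport G u₀) = ∑ j, #(R j ∩ codewordSupport G u₀) := by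
        rw [sum_card_inter_eq_card_biUnion_inter hd, inter_eq_right.2 fun h _ => hcover h]
    _ = ∑ _j : Fin k, 1 := sum_congr rfl fun j _ =>
        card_inter_codewordSupport_eq_one (fun h _ => hcol h) hi
          fun u hu hne => (hexact u hu hne).1 j
    _ = k := by simp

lemma IsPIRMatrix.fifteen_mul_le (hG : IsPIRMatrix 4 n k G) : 15 * k ≤ 8 * n := by
  have := hG.sum_card_codewordSupport_eq_or
  have := sum_card_codewordSupport G
  have : #{h | (fun r => G r h) ≠ 0} ≤ n := (card_filter_le _ _).trans (card_fin n).le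
  omega

lemma IsPIRMatrix.fifteen_mul_add_ten_le (hG : IsPIRMatrix 4 n k G) (hk : k % 8 = 2) :
    15 * k + 10 ≤ 8 * n := by
  have := hG.sum_card_codewordSupport_eq_or
  have := sum_card_codewordSupport G
  have : #{h | (fun r => G r h) ≠ 0} ≤ n := (card_filter_le _ _).trans (card_fin n).le
  omega

lemma IsPIRMatrix.fifteen_mul_add_twelve_le (hG : IsPIRMatrix 4 n k G) (hk : k % 8 = 4) :
    15 * k + 12 ≤ 8 * n := by
  by_contra hlt
  have hw : ∀ u ≠ 0, k ≤ #(codewordSupport G u) := fun _ hu => hG.le_card_codewordSupport hu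
  have hsum := sum_card_codewordSupport G
  have hN : #{h | (fun r => G r h) ≠ 0} ≤ n := (card_filter_le _ _).trans (card_fin n).le
  have hB : ∑ u ∈ {u | u ≠ 0}, #(codewordSupport G u) = 15 * k + 4 := by
    have := hG.sum_card_codewordSupport_eq_or
    omega
  have hcard : #({h | (fun r => G r h) ≠ 0} : Finset (Fin n)) = #(univ : Finset (Fin n)) := by
    rw [card_univ, Fintype.card_fin]; omega
  have hcol (h : Fin n) : (fun r => G r h) ≠ 0 := filter_card_eq hcard h (mem_univ h)
  obtain ⟨u₀, hu₀, htight⟩ := exists_forall_ne_eq hw (four_dvd_sum_card_codewordSupport G) hB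
  obtain ⟨i, hi⟩ := Function.ne_iff.1 hu₀
  have h₀ := hG.card_codewordSupport_eq_of_forall_ne hcol hi
    fun u hu hne => htight u (ne_zero_of_apply_ne_zero hu) hne
  have := sum_ne_zero_of_forall_eq fun u hu => if h : u = u₀ then h ▸ h₀ else htight u hu h
  omega

end LowerBounds

theorem PIRlen_four_eight_mul_add_two (τ : ℕ) : PIRlen 4 (8 * τ + 2) = 15 * τ + 5 := by
  obtain ⟨G, hG⟩ := isPIRMatrix_pirMatrix₂.exists_add_fifteen_mul τ
  refine PIRlen_eq_of_isPIRMatrix (by omega) hG fun m _ hG' => ?_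
  have := hG'.fifteen_mul_add_ten_le (by omega)
  omega

theorem PIRlen_four_eight_mul_add_four (τ : ℕ) : PIRlen 4 (8 * τ + 4) = 15 * τ + 9 := by
  obtain ⟨G, hG⟩ := isPIRMatrix_pirMatrix₄.exists_add_fifteen_mul τ
  refine PIRlen_eq_of_isPIRMatrix (by omega) hG fun m _ hG' => ?_
  have := hG'.fifteen_mul_add_twelve_le (by omega)
  omega

theorem PIRlen_four_eight_mul_add_six (τ : ℕ) : PIRlen 4 (8 * τ + 6) = 15 * τ + 12 := by
  obtain ⟨G, hG⟩ := isPIRMatrix_pirMatrix₆.exists_add_fifteen_mul τ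
  refine PIRlen_eq_of_isPIRMatrix (by omega) hG fun m _ hG' => ?_
  have := hG'.fifteen_mul_le
  omega

theorem PIRlen_four_eight_mul_add_eight (τ : ℕ) : PIRlen 4 (8 * τ + 8) = 15 * τ + 15 := by
  obtain ⟨G, hG⟩ := isPIRMatrix_simplex.exists_add_fifteen_mul τ
  refine PIRlen_eq_of_isPIRMatrix (by omega) hG fun m _ hG' => ?_
  have := hG'.fifteen_mul_le
  omega

/-- `P(4,2)=5`, `P(4,4)=9`, `P(4,6)=12`, `P(4,8)=15`, and for every even
`k > 8`: `P(4,k) = P(4, k - 8τ) + 15τ` where `τ = ⌊(k-1)/8⌋`. -/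
theorem stmt_17 :
    PIRlen 4 2 = 5 ∧ PIRlen 4 4 = 9 ∧ PIRlen 4 6 = 12 ∧ PIRlen 4 8 = 15 ∧
    ∀ k : ℕ, 8 < k → Even k →
      PIRlen 4 k = PIRlen 4 (k - 8 * ((k - 1) / 8)) + 15 * ((k - 1) / 8) := by
  have h₂ : PIRlen 4 2 = 5 := PIRlen_four_eight_mul_add_two 0
  have h₄ : PIRlen 4 4 = 9 := PIRlen_four_eight_mul_add_four 0
  have h₆ : PIRlen 4 6 = 12 := PIRlen_four_eight_mul_add_six 0
  have h₈ : PIRlen 4 8 = 15 := PIRlen_four_eight_mul_add_eight 0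
  refine ⟨h₂, h₄, h₆, h₈, fun k hk hke => ?_⟩
  obtain ⟨τ, hτ⟩ : ∃ τ, (k - 1) / 8 = τ := ⟨_, rfl⟩
  have := Nat.even_iff.1 hke
  rw [hτ]
  rcases (by omega : k = 8 * τ + 2 ∨ k = 8 * τ + 4 ∨ k = 8 * τ + 6 ∨ k = 8 * τ + 8) with
      rfl | rfl | rfl | rfl <;>
    simp only [Nat.add_sub_cancel_left, PIRlen_four_eight_mul_add_two,
      PIRlen_four_eight_mul_add_four, PIRlen_four_eight_mul_add_six,
      PIRlen_four_eight_mul_add_eight, h₂, h₄, h₆, h₈] <;> ring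
end

section
/- For every integer s ≥ 5 one has P(s, 2^{s-2}) ≤ 5·2^{s-3} − 1; that is, there exists an s-by-(5·2^{s-3} − 1) matrix over F_2 that is a 2^{s-2}-PIR generator matrix. -/
open Finset Function

namespace Fin
variable {M : Type*} {m n : ℕ}

theorem append_add [Add M] (u u' : Fin m → M) (v v' : Fin n → M) :
    append (u + u') (v + v') = append u v + append u' v' := by
  funext i; refine addCases (fun j => ?_) (fun j => ?_) i <;> simp

theorem append_single_zero [Zero M] (j : Fin m) (a : M) :
    append (Pi.single j a) (0 : Fin n → M) = Pi.single (castAdd n j) a := by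
  funext i; refine addCases (fun j' => ?_) (fun j' => ?_) i
  · simp [Pi.single_apply]
  · simp [Pi.single_apply, Fin.ext_iff]; omega

theorem append_zero_single [Zero M] (j : Fin n) (a : M) :
    append (0 : Fin m → M) (Pi.single j a) = Pi.single (natAdd m j) a := by
  funext i; refine addCases (fun j' => ?_) (fun j' => ?_) i
  · simp [Pi.single_apply, Fin.ext_iff]; omega
  · simp [Pi.single_apply]

theorem append_zero_zero [Zero M] : append (0 : Fin m → M) (0 : Fin n → M) = 0 := by
  funext i; refine addCases (fun j => ?_) (fun j => ?_) i <;> simp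

end Fin

section Recovery
variable {ι κ E : Type*} [AddCommMonoid E]

def HasRecoverySets (col : ι → E) (k : ℕ) (u : E) : Prop :=
  ∃ R : Fin k → Finset ι, Pairwise (Disjoint on R) ∧ ∀ j, ∑ x ∈ R j, col x = u

theorem HasRecoverySets.of_decode [Fintype κ] {col : ι → E} {k : ℕ} {u : E}
    (hk : Fintype.card κ = k) (R : κ → Finset ι) (g : ι → κ) (hg : ∀ j, ∀ x ∈ R j, g x = j)
    (hsum : ∀ j, ∑ x ∈ R j, col x = u) : HasRecoverySets col k u := by
  subst hk
  let e := (Fintype.equivFin κ).symm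
  refine ⟨R ∘ e, fun a b hab => disjoint_left.2 fun x ha hb => hab ?_, fun j => hsum _⟩
  exact e.injective ((hg _ x ha).symm.trans (hg _ x hb))

theorem exists_isPIRMatrix_of_hasRecoverySets [Fintype ι] [DecidableEq ι] {s n k : ℕ}
    (col : ι → Fin s → ZMod 2) (d₀ : ι) (h₀ : col d₀ = 0) (hn : Fintype.card ι = n + 1)
    (h : ∀ i, HasRecoverySets col k (Pi.single i 1)) : ∃ G, IsPIRMatrix s n k G := by
  let e : Fin n ≃ {d // d ≠ d₀} := (Fintype.equivFinOfCardEq <| by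
    rw [Fintype.card_subtype_compl, Fintype.card_subtype_eq, hn, Nat.add_sub_cancel]).symm
  refine ⟨Matrix.of fun r h => col (e h) r, fun i => ?_⟩
  obtain ⟨R, hdisj, hsum⟩ := h i
  refine ⟨fun j => ((R j).subtype (· ≠ d₀)).map e.symm.toEmbedding, fun j j' hj => ?_,
    fun j => ?_⟩
  · rw [disjoint_map]
    exact disjoint_left.2 fun x hx hx' =>
      disjoint_left.1 (hdisj hj) (mem_subtype.1 hx) (mem_subtype.1 hx')
  · simp only [sum_map, Equiv.coe_toEmbedding, Matrix.of_apply, Equiv.apply_symm_apply]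
    rw [sum_subtype_eq_sum_filter col, sum_filter_of_ne fun x _ hx => ?_, hsum]
    rintro rfl
    exact hx h₀

end Recovery

theorem exists_perm_add_perm {m : ℕ} (hm : 2 ≤ m) :
    ∃ σ τ : Equiv.Perm (Fin m → ZMod 2), ∀ v, v + σ v = τ v := by
  classical
  let K := GaloisField 2 m
  let _ : Fintype K := Fintype.ofFinite K
  have hcard : ({0, -1} : Finset K).card < (univ : Finset K).card := by
    rw [card_univ, Fintype.card_eq_nat_card, GaloisField.card 2 m (by omega)]
    exact card_le_two.trans_lt <| (by norm_num : 2 < 2 ^ 2).trans_le <|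
      Nat.pow_le_pow_right two_pos hm
  obtain ⟨ω, -, hω⟩ := exists_mem_notMem_of_card_lt_card hcard
  have hω₀ : ω ≠ 0 := fun h => hω (by simp [h])
  have hω₁ : 1 + ω ≠ 0 := fun h => hω (by simp [eq_neg_of_add_eq_zero_right h])
  let φ : K ≃ₗ[ZMod 2] (Fin m → ZMod 2) := LinearEquiv.ofFinrankEq _ _ <| by
    rw [GaloisField.finrank 2 (by omega), Module.finrank_fin_fun]
  refine ⟨φ.toEquiv.permCongr (Units.mulLeft (Units.mk0 ω hω₀)),
    φ.toEquiv.permCongr (Units.mulLeft (Units.mk0 (1 + ω) hω₁)), fun v => ?_⟩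
  simp [Equiv.permCongr_apply, add_mul]

namespace PIR
variable {m : ℕ}

def label : Option (ZMod 2 × ZMod 2) → Fin 3 → ZMod 2
  | none => 0
  | some (a, b) => ![a, b, 1]

def column (d : (Fin m → ZMod 2) × Option (ZMod 2 × ZMod 2)) : Fin (m + 3) → ZMod 2 :=
  Fin.append d.1 (label d.2)

theorem hasRecoverySets_column_castAdd (j : Fin m) :
    HasRecoverySets column (2 ^ (m + 1)) (Pi.single (Fin.castAdd 3 j) 1) := by
  -- The pair `{x, x + e_j}` of the hyperplane is indexed by its member `(v, a, b, 1)`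
  -- with `v j = a`.
  refine .of_decode (κ := (Fin m → ZMod 2) × ZMod 2) (by simp [pow_succ])
    (fun p => {(p.1, some (p.1 j, p.2)), (p.1 + Pi.single j 1, some (p.1 j, p.2))})
    (fun d => d.2.elim (d.1, 0) fun l => (update d.1 j l.1, l.2)) ?_ fun p => ?_
  · rintro ⟨v, b⟩ x hx
    simp only [mem_insert, mem_singleton] at hx
    rcases hx with rfl | rfl
    · simp
    · simp [update_eq_iff, Pi.single_apply]
  · rw [sum_pair (by simp), ← Fin.append_single_zero]
    simp only [column, ← Fin.append_add, ← add_assoc, ZModModule.add_self, zero_add]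

theorem hasRecoverySets_column_natAdd_zero :
    HasRecoverySets column (2 ^ (m + 1)) (Pi.single (Fin.natAdd m (0 : Fin 3)) 1) := by
  refine .of_decode (κ := (Fin m → ZMod 2) × ZMod 2) (by simp [pow_succ])
    (fun p => {(p.1, some (0, p.2)), (p.1, some (1, p.2))})
    (fun d => (d.1, d.2.elim 0 Prod.snd)) ?_ fun p => ?_
  · rintro ⟨v, b⟩ x hx
    simp only [mem_insert, mem_singleton] at hx
    rcases hx with rfl | rfl <;> rfl
  · rw [sum_pair (by simp), ← Fin.append_zero_single]
    simp only [column, ← Fin.append_add, ZModModule.add_self]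
    congr 1
    generalize p.2 = b
    revert b; decide

theorem hasRecoverySets_column_natAdd_one :
    HasRecoverySets column (2 ^ (m + 1)) (Pi.single (Fin.natAdd m (1 : Fin 3)) 1) := by
  refine .of_decode (κ := (Fin m → ZMod 2) × ZMod 2) (by simp [pow_succ])
    (fun p => {(p.1, some (p.2, 0)), (p.1, some (p.2, 1))})
    (fun d => (d.1, d.2.elim 0 Prod.fst)) ?_ fun p => ?_
  · rintro ⟨v, b⟩ x hx
    simp only [mem_insert, mem_singleton] at hx
    rcases hx with rfl | rfl <;> rfl
  · rw [sum_pair (by simp), ← Fin.append_zero_single]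
    simp only [column, ← Fin.append_add, ZModModule.add_self]
    congr 1
    generalize p.2 = a
    revert a; decide

theorem hasRecoverySets_column_natAdd_two (σ τ : Equiv.Perm (Fin m → ZMod 2))
    (hστ : ∀ v, v + σ v = τ v) :
    HasRecoverySets column (2 ^ (m + 1)) (Pi.single (Fin.natAdd m (2 : Fin 3)) 1) := by
  refine .of_decode (κ := (Fin m → ZMod 2) ⊕ (Fin m → ZMod 2)) (by simp [pow_succ, mul_two])
    (Sum.elim (fun v => {(v, none), (v, some (0, 0))})
      fun v => {(v, some (1, 0)), (σ v, some (0, 1)), (τ v, some (1, 1))})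
    (fun d => d.2.elim (.inl d.1) fun l =>
      if l.1 = 0 then (if l.2 = 0 then .inl d.1 else .inr (σ.symm d.1))
      else (if l.2 = 0 then .inr d.1 else .inr (τ.symm d.1)))
    ?_ ?_
  · rintro (v | v) x hx <;>
      simp only [Sum.elim_inl, Sum.elim_inr, mem_insert, mem_singleton] at hx
    · rcases hx with rfl | rfl <;> simp
    · rcases hx with rfl | rfl | rfl <;> simp
  · rintro (v | v)
    · rw [Sum.elim_inl, sum_pair (by simp), ← Fin.append_zero_single]
      simp only [column, ← Fin.append_add, ZModModule.add_self]
      congr 1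
      decide
    · rw [Sum.elim_inr, sum_insert (by simp), sum_pair (by simp), ← Fin.append_zero_single]
      simp only [column, ← Fin.append_add, ← add_assoc, hστ, ZModModule.add_self]
      congr 1
      decide

theorem exists_isPIRMatrix_add_three (hm : 2 ≤ m) :
    ∃ G, IsPIRMatrix (m + 3) (5 * 2 ^ m - 1) (2 ^ (m + 1)) G := by
  obtain ⟨σ, τ, hστ⟩ := exists_perm_add_perm hm
  refine exists_isPIRMatrix_of_hasRecoverySets column (0, none) (Fin.append_zero_zero ..) ?_
    fun i => ?_
  · simp only [Fintype.card_prod, Fintype.card_fun, Fintype.card_option, ZMod.card,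
      Fintype.card_fin]
    have := Nat.one_le_two_pow (n := m)
    omega
  · refine Fin.addCases (fun j => ?_) (fun t => ?_) i
    · exact hasRecoverySets_column_castAdd j
    · fin_cases t
      exacts [hasRecoverySets_column_natAdd_zero, hasRecoverySets_column_natAdd_one,
        hasRecoverySets_column_natAdd_two σ τ hστ]

end PIR

/-- For every `s ≥ 5` one has `P(s, 2^{s-2}) ≤ 5·2^{s-3} - 1`, witnessed by an
actual `s × (5·2^{s-3} - 1)` `2^{s-2}`-PIR generator matrix. -/
theorem stmt_19 (s : ℕ) (hs : 5 ≤ s) :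
    PIRlen s (2 ^ (s - 2)) ≤ 5 * 2 ^ (s - 3) - 1 ∧
    ∃ G : Matrix (Fin s) (Fin (5 * 2 ^ (s - 3) - 1)) (ZMod 2),
      IsPIRMatrix s (5 * 2 ^ (s - 3) - 1) (2 ^ (s - 2)) G := by
  obtain ⟨m, rfl⟩ : ∃ m, s = m + 3 := ⟨s - 3, by omega⟩
  obtain ⟨G, hG⟩ := PIR.exists_isPIRMatrix_add_three (m := m) (by omega)
  rw [show m + 3 - 2 = m + 1 by omega, Nat.add_sub_cancel]
  have hpos : 0 < 5 * 2 ^ m - 1 := by have := Nat.one_le_two_pow (n := m); omega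
  exact ⟨Nat.sInf_le ⟨hpos, G, hG⟩, G, hG⟩
end
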